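/- Quantum logical contextuality of the Hardy model: let ψ₀ = (e₀⊗e₀ + e₁⊗e₀ + e₁⊗e₁)/√3 in EuclideanSpace ℂ (Fin 2 × Fin 2), and let vZ(a) = e_a and vX(a) = (e₀ + (−1)^a e₁)/√2 for a ∈ {0,1}. Then ⟪vX(1)⊗vX(1), ψ₀⟫ ≠ 0, yet for every a, b ∈ {0,1} at least one of the three inner products ⟪vZ(a)⊗vZ(b), ψ₀⟫, ⟪vZ(a)⊗vX(1), ψ₀⟫, ⟪vX(1)⊗vZ(b), ψ₀⟫ is zero. That is, the possible joint X-outcome (1,1) cannot be extended by any Z-outcome assignment (a,b) without producing a zero-probability event in some measurement context. -/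

import Mathlib

open scoped InnerProductSpace

noncomputable section

/-- Standard basis vectors `e₀, e₁` of `ℂ²`. -/
def e (a : Fin 2) : EuclideanSpace ℂ (Fin 2) := EuclideanSpace.single a 1

/-- Twofold product vector: `(φ⊗χ)(j,k) = φ(j)·χ(k)`. -/
def tp2 (φ χ : EuclideanSpace ℂ (Fin 2)) :
    EuclideanSpace ℂ (Fin 2 × Fin 2) :=
  WithLp.toLp 2 (fun p => φ p.1 * χ p.2)

/-- The Hardy state `ψ₀ = (e₀⊗e₀ + e₁⊗e₀ + e₁⊗e₁)/√3`. -/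
def ψ₀ : EuclideanSpace ℂ (Fin 2 × Fin 2) :=
  (Real.sqrt 3 : ℂ)⁻¹ • (tp2 (e 0) (e 0) + tp2 (e 1) (e 0) + tp2 (e 1) (e 1))

/-- Z-basis (computational basis) vectors `vZ(a) = e_a`. -/
def vZ (a : Fin 2) : EuclideanSpace ℂ (Fin 2) := e a

/-- X-basis vectors `vX(a) = (e₀ + (−1)^a e₁)/√2`. -/
def vX (a : Fin 2) : EuclideanSpace ℂ (Fin 2) :=
  (Real.sqrt 2 : ℂ)⁻¹ • (e 0 + ((-1 : ℂ) ^ (a : ℕ)) • e 1)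

/-!
The amplitude of `vZ a ⊗ vX 1` is `(ψ(a,0) - ψ(a,1))/√2` and that of `vX 1 ⊗ vZ b` is
`(ψ(0,b) - ψ(1,b))/√2`. For the Hardy state, whose only vanishing coefficient is `ψ₀(0,1)`,
the first vanishes when `a = 1` and the second when `b = 0`, so the one remaining assignment
`(a, b) = (0, 1)` is excluded by `ψ₀(0,1) = 0` itself. Meanwhile the amplitude of
`vX 1 ⊗ vX 1` is `(ψ(0,0) - ψ(0,1) - ψ(1,0) + ψ(1,1))/2 = 1/(2√3) ≠ 0`.
-/
lemma inner_tp2 (φ χ : EuclideanSpace ℂ (Fin 2)) (ψ : EuclideanSpace ℂ (Fin 2 × Fin 2)) :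
    ⟪tp2 φ χ, ψ⟫_ℂ = ∑ j, ∑ k, (starRingEnd ℂ) (φ j) * (starRingEnd ℂ) (χ k) * ψ (j, k) := by
  simp [PiLp.inner_apply, tp2, Fintype.sum_prod_type, mul_comm]

lemma vZ_apply (a j : Fin 2) : vZ a j = if j = a then 1 else 0 := by
  simp [vZ, e]

lemma vX_apply (a j : Fin 2) : vX a j = (Real.sqrt 2 : ℂ)⁻¹ * (-1) ^ ((a : ℕ) * j) := by
  fin_cases j <;> simp [vX, e]

lemma inner_tp2_vZ_vZ (ψ : EuclideanSpace ℂ (Fin 2 × Fin 2)) (a b : Fin 2) :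
    ⟪tp2 (vZ a) (vZ b), ψ⟫_ℂ = ψ (a, b) := by
  simp [inner_tp2, vZ_apply]

lemma inner_tp2_vZ_vX (ψ : EuclideanSpace ℂ (Fin 2 × Fin 2)) (a c : Fin 2) :
    ⟪tp2 (vZ a) (vX c), ψ⟫_ℂ = (Real.sqrt 2 : ℂ)⁻¹ * (ψ (a, 0) + (-1) ^ (c : ℕ) * ψ (a, 1)) := by
  simp [inner_tp2, vZ_apply, vX_apply, Fin.sum_univ_two]
  ring

lemma inner_tp2_vX_vZ (ψ : EuclideanSpace ℂ (Fin 2 × Fin 2)) (c b : Fin 2) :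
    ⟪tp2 (vX c) (vZ b), ψ⟫_ℂ = (Real.sqrt 2 : ℂ)⁻¹ * (ψ (0, b) + (-1) ^ (c : ℕ) * ψ (1, b)) := by
  simp [inner_tp2, vZ_apply, vX_apply, Fin.sum_univ_two]
  ring

lemma inv_sqrt_two_sq : ((Real.sqrt 2 : ℂ)⁻¹) ^ 2 = 2⁻¹ := by
  rw [inv_pow, ← Complex.ofReal_pow, Real.sq_sqrt zero_le_two, Complex.ofReal_ofNat]

lemma inner_tp2_vX_vX (ψ : EuclideanSpace ℂ (Fin 2 × Fin 2)) (c d : Fin 2) :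
    ⟪tp2 (vX c) (vX d), ψ⟫_ℂ = 2⁻¹ * (ψ (0, 0) + (-1) ^ (d : ℕ) * ψ (0, 1)
      + (-1) ^ (c : ℕ) * ψ (1, 0) + (-1) ^ ((c : ℕ) + d) * ψ (1, 1)) := by
  simp [inner_tp2, vX_apply, Fin.sum_univ_two, ← inv_sqrt_two_sq]
  ring

lemma ψ₀_apply (p : Fin 2 × Fin 2) : ψ₀ p = if p = (0, 1) then 0 else (Real.sqrt 3 : ℂ)⁻¹ := by
  rcases p with ⟨j, k⟩
  fin_cases j <;> fin_cases k <;> simp [ψ₀, tp2, e]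

/-- Quantum logical contextuality of the Hardy model: the joint X-outcome
`(1,1)` is possible, yet it cannot be extended by any Z-outcome assignment
`(a,b)` without producing a zero-probability event in some context. -/
theorem hardy_logical_contextuality :
    ⟪tp2 (vX 1) (vX 1), ψ₀⟫_ℂ ≠ 0 ∧
    ∀ a b : Fin 2,
      ⟪tp2 (vZ a) (vZ b), ψ₀⟫_ℂ = 0 ∨
      ⟪tp2 (vZ a) (vX 1), ψ₀⟫_ℂ = 0 ∨
      ⟪tp2 (vX 1) (vZ b), ψ₀⟫_ℂ = 0 := by
  refine ⟨?_, fun a b => ?_⟩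
  · rw [inner_tp2_vX_vX]
    simp [ψ₀_apply]
  have hZZ : ⟪tp2 (vZ 0) (vZ 1), ψ₀⟫_ℂ = 0 := by simp [inner_tp2_vZ_vZ, ψ₀_apply]
  have hZX : ⟪tp2 (vZ 1) (vX 1), ψ₀⟫_ℂ = 0 := by simp [inner_tp2_vZ_vX, ψ₀_apply]
  have hXZ : ⟪tp2 (vX 1) (vZ 0), ψ₀⟫_ℂ = 0 := by simp [inner_tp2_vX_vZ, ψ₀_apply]
  fin_cases a <;> fin_cases b
  exacts [Or.inr (Or.inr hXZ), Or.inl hZZ, Or.inr (Or.inl hZX), Or.inr (Or.inl hZX)]
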